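/- arXiv:0812.4829 — 3 statements merged into one kernel-verified Lean document; each statement's English description precedes it below -/
import Mathlib

section
/- Let w be a complex number with positive imaginary part, and let z₄, z₅ be the two roots of the quadratic z² − (2/3)w·z − 1/3 = 0. Then both z₄ and z₅ lie in the open upper half-plane, and the sum of their arguments equals π (equivalently, z₄·z₅ = −1/3 is a negative real number and Im z₄ > 0, Im z₅ > 0). -/
/-!
If `z₁ z₂ = -r` with `r > 0`, then `z₂ = -(r / |z₁|²) · conj z₁`. Hence `z₂` is a positive
multiple of `-conj z₁`: the two imaginary parts have the same sign, and for `Im z₁ > 0` the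
argument of `z₂` is the reflection `π - arg z₁`. With `z₁ + z₂ = (2/3) w` and `Im w > 0` the
common sign must be positive.
-/

open Complex ComplexConjugate Real

namespace Complex

theorem arg_neg_conj_of_im_pos {z : ℂ} (hz : 0 < z.im) : arg (-conj z) = π - arg z := by
  have harg : arg z ≠ π := fun h => hz.ne' (arg_eq_pi_iff.mp h).2
  rw [arg_neg_eq_arg_add_pi_of_im_neg (by simpa using hz), arg_conj, if_neg harg]
  ring

section NegativeProduct

variable {z₁ z₂ : ℂ} {r : ℝ}

theorem eq_ofReal_mul_neg_conj_of_mul_eq_neg (hr : 0 < r) (h : z₁ * z₂ = -r) :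
    z₂ = ((r / normSq z₁ : ℝ) : ℂ) * -conj z₁ := by
  have hz₁ : z₁ ≠ 0 := by
    rintro rfl
    simp [hr.ne'] at h
  have hN : (normSq z₁ : ℂ) ≠ 0 := by exact_mod_cast (normSq_pos.mpr hz₁).ne'
  apply mul_left_cancel₀ hz₁
  rw [h, ofReal_div, mul_left_comm, mul_neg, mul_conj]
  field_simp

theorem im_eq_mul_im_of_mul_eq_neg (hr : 0 < r) (h : z₁ * z₂ = -r) :
    z₂.im = r / normSq z₁ * z₁.im := by
  rw [eq_ofReal_mul_neg_conj_of_mul_eq_neg hr h]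
  simp

theorem im_pos_of_mul_eq_neg (hr : 0 < r) (h : z₁ * z₂ = -r) (hsum : 0 < (z₁ + z₂).im) :
    0 < z₁.im := by
  have hcoef : 0 ≤ r / normSq z₁ := div_nonneg hr.le (normSq_nonneg z₁)
  rw [add_im, im_eq_mul_im_of_mul_eq_neg hr h] at hsum
  by_contra! hz₁
  nlinarith [mul_nonpos_of_nonneg_of_nonpos hcoef hz₁]

theorem arg_add_arg_eq_pi_of_mul_eq_neg (hr : 0 < r) (h : z₁ * z₂ = -r) (hz₁ : 0 < z₁.im) :
    arg z₁ + arg z₂ = π := by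
  have hz₁' : z₁ ≠ 0 := fun h0 => hz₁.ne' (by simp [h0])
  rw [eq_ofReal_mul_neg_conj_of_mul_eq_neg hr h,
    arg_real_mul _ (div_pos hr (normSq_pos.mpr hz₁')), arg_neg_conj_of_im_pos hz₁]
  ring

end NegativeProduct

end Complex

theorem stmt_8_general (w z₄ z₅ : ℂ) (hw : 0 < w.im)
    (hsum : z₄ + z₅ = (2/3) * w) (hprod : z₄ * z₅ = -1/3) :
    0 < z₄.im ∧ 0 < z₅.im ∧ z₄.arg + z₅.arg = Real.pi := by
  have hr : (0 : ℝ) < 1 / 3 := by norm_num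
  have h₄₅ : z₄ * z₅ = -((1 / 3 : ℝ) : ℂ) := by rw [hprod]; push_cast; ring
  have h₅₄ : z₅ * z₄ = -((1 / 3 : ℝ) : ℂ) := by rw [mul_comm, h₄₅]
  have him : 0 < (z₄ + z₅).im := by
    rw [hsum]
    simpa using hw
  have hz₄ := im_pos_of_mul_eq_neg hr h₄₅ him
  have hz₅ := im_pos_of_mul_eq_neg hr h₅₄ (by rwa [add_comm])
  exact ⟨hz₄, hz₅, arg_add_arg_eq_pi_of_mul_eq_neg hr h₄₅ hz₄⟩

/-- If `w` is in the open upper half-plane and `z₄, z₅` are the two roots of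
`z² - (2/3)w z - 1/3` (so `z₄ + z₅ = (2/3)w` and `z₄ z₅ = -1/3`), then both roots lie in the
open upper half-plane and the sum of their arguments is `π`. -/
theorem stmt_8 (w z₄ z₅ : ℂ) (hw : 0 < w.im)
    (h4 : z₄ ^ 2 - (2/3) * w * z₄ - 1/3 = 0)
    (h5 : z₅ ^ 2 - (2/3) * w * z₅ - 1/3 = 0)
    (hsum : z₄ + z₅ = (2/3) * w) (hprod : z₄ * z₅ = -1/3) :
    0 < z₄.im ∧ 0 < z₅.im ∧ z₄.arg + z₅.arg = Real.pi :=
  stmt_8_general w z₄ z₅ hw hsum hprod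
end

section
/- Let w be a complex number with positive imaginary part, and let z₄, z₅ be the two roots of z² − (2/3)(1+w)z + w/3 = 0. Then both z₄ and z₅ lie in the open upper half-plane, and arg z₄ + arg z₅ = arg w (taking arguments in (0,π)). -/
open Complex

/-- Writing `z = a + bi` and `w = u + vi`, the imaginary part of the equation gives
`v ((1 - 2a)² + 4b²) = 2b (3(a - 1/2)² + 3b² + 1/4)`, so `b` has the sign of `v`. -/
lemma im_pos_of_critical_point {w z : ℂ} (hw : 0 < w.im)
    (h : z ^ 2 - (2/3) * (1 + w) * z + w/3 = 0) : 0 < z.im := by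
  obtain ⟨hre, him⟩ := Complex.ext_iff.1 h
  simp only [pow_two, mul_re, mul_im, add_re, add_im, sub_re, sub_im, one_re, one_im,
    div_ofNat_re, div_ofNat_im, zero_re, zero_im, re_ofNat, im_ofNat] at hre him
  set a := z.re
  set b := z.im
  have key : w.im * ((1 - 2*a)^2 + (2*b)^2) = 2*b * (1 - 3*a + 3*(a^2 + b^2)) := by
    linear_combination (3*(1 - 2*a)) * him + (6*b) * hre
  have hq : 0 < 1 - 3*a + 3*(a^2 + b^2) := by nlinarith [sq_nonneg (a - 1/2), sq_nonneg b]
  have hD : 0 < (1 - 2*a)^2 + (2*b)^2 := by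
    by_contra hD
    have ha : a = 1/2 := by nlinarith [sq_nonneg (1 - 2*a), sq_nonneg (2*b)]
    have hb : b = 0 := by nlinarith [sq_nonneg (1 - 2*a), sq_nonneg (2*b)]
    rw [ha, hb] at hre
    linarith
  have : 0 < 2*b * (1 - 3*a + 3*(a^2 + b^2)) := key ▸ mul_pos hw hD
  linarith [pos_of_mul_pos_left this hq.le]

lemma arg_mul_of_im_pos {x y : ℂ} (hx : 0 < x.im) (hy : 0 < y.im) (hxy : 0 ≤ (x * y).im) :
    (x * y).arg = x.arg + y.arg := by
  have hx₀ : x ≠ 0 := fun h ↦ by simp [h] at hx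
  have hy₀ : y ≠ 0 := fun h ↦ by simp [h] at hy
  have hx₁ := arg_lt_pi_iff.2 (Or.inr hx.ne')
  have hy₁ := arg_lt_pi_iff.2 (Or.inr hy.ne')
  have hx₂ := arg_nonneg_iff.2 hx.le
  have hy₂ := arg_nonneg_iff.2 hy.le
  rw [arg_mul_eq_add_arg_iff hx₀ hy₀]
  refine ⟨by linarith [Real.pi_pos], ?_⟩
  by_contra! hgt
  have hwrap : (x * y).arg = x.arg + y.arg - 2 * Real.pi := by
    rw [← arg_coe_angle_toReal_eq_arg, arg_mul_coe_angle hx₀ hy₀, ← Real.Angle.coe_add,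
      Real.Angle.toReal_coe_eq_self_sub_two_pi_iff]
    constructor <;> linarith
  have : (x * y).arg < 0 := by linarith
  exact (arg_neg_iff.1 this).not_ge hxy

theorem stmt_9_general (w z₄ z₅ : ℂ) (hw : 0 < w.im)
    (h4 : z₄ ^ 2 - (2/3) * (1 + w) * z₄ + w/3 = 0)
    (h5 : z₅ ^ 2 - (2/3) * (1 + w) * z₅ + w/3 = 0)
    (hprod : z₄ * z₅ = w/3) :
    0 < z₄.im ∧ 0 < z₅.im ∧ z₄.arg + z₅.arg = w.arg := by
  have h4i := im_pos_of_critical_point hw h4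
  have h5i := im_pos_of_critical_point hw h5
  have hw' : w = (3 : ℝ) * (z₄ * z₅) := by rw [hprod]; push_cast; ring
  have hprod_im : 0 ≤ (z₄ * z₅).im := by rw [hprod, div_ofNat_im]; positivity
  refine ⟨h4i, h5i, ?_⟩
  rw [hw', arg_real_mul _ three_pos, arg_mul_of_im_pos h4i h5i hprod_im]

/-- If `w` is in the open upper half-plane and `z₄, z₅` are the two roots of
`z² - (2/3)(1+w) z + w/3` (so `z₄ + z₅ = (2/3)(1+w)` and `z₄ z₅ = w/3`), then both roots lie
in the open upper half-plane and `arg z₄ + arg z₅ = arg w`. -/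
theorem stmt_9 (w z₄ z₅ : ℂ) (hw : 0 < w.im)
    (h4 : z₄ ^ 2 - (2/3) * (1 + w) * z₄ + w/3 = 0)
    (h5 : z₅ ^ 2 - (2/3) * (1 + w) * z₅ + w/3 = 0)
    (hsum : z₄ + z₅ = (2/3) * (1 + w)) (hprod : z₄ * z₅ = w/3) :
    0 < z₄.im ∧ 0 < z₅.im ∧ z₄.arg + z₅.arg = w.arg :=
  stmt_9_general w z₄ z₅ hw h4 h5 hprod
end

section
/- Let f, φ be complex polynomials with no common root, and suppose φ(z)+tᵢf(z) = (z−aᵢ)Qᵢ(z)² for four distinct tᵢ and distinct aᵢ. Then there exists a nonzero constant N such that Q₁(z)Q₂(z)Q₃(z)Q₄(z) = N·(φ′(z)f(z) − φ(z)f′(z)). -/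
/-!
Each `Qᵢ` divides the Wronskian `W = φ' f - φ f'`: adding `tᵢ f` to `φ` changes `W` only by
`tᵢ W(f, f) = 0`, and `Qᵢ` divides both `(X - aᵢ) Qᵢ²` and its derivative. Since `φ` and `f`
are coprime, so are `φ + tᵢ f` and `φ + tⱼ f` for `tᵢ ≠ tⱼ`, hence the `Qᵢ` are pairwise coprime
and their product, of degree `4 (n - 1) / 2 = 2n - 2`, divides `W`. As `W ≠ 0` (`φ, f` are
coprime and `φ' ≠ 0`) and `deg W < deg f + deg φ ≤ 2n - 1`, the two are associated.
-/

open Polynomial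

theorem IsCoprime.add_mul_add_mul_of_isUnit_sub {R : Type*} [CommRing R] {x y u v : R}
    (h : IsCoprime x y) (huv : IsUnit (u - v)) : IsCoprime (x + u * y) (x + v * y) := by
  obtain ⟨p, q, hpq⟩ := h
  obtain ⟨d, hd⟩ := huv.exists_left_inv
  exact ⟨d * (q - p * v), d * (p * u - q), by linear_combination d * (u - v) * hpq + hd⟩

namespace Polynomial

section CommRing

variable {R : Type*} [CommRing R]

theorem wronskian_add_C_mul_self_right (a b : R[X]) (t : R) :
    wronskian a (b + C t * a) = wronskian a b := by
  simp only [wronskian, derivative_add, derivative_mul, derivative_C, zero_mul, zero_add]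
  ring

theorem dvd_wronskian_of_sq_dvd_right {p a b : R[X]} (h : p ^ 2 ∣ b) : p ∣ wronskian a b := by
  have hb : p ∣ b := (dvd_pow_self p two_ne_zero).trans h
  have hb' : p ∣ derivative b := by
    simpa using pow_sub_one_dvd_derivative_of_pow_dvd h
  exact dvd_sub (dvd_mul_of_dvd_right hb' a) (dvd_mul_of_dvd_right hb _)

theorem dvd_wronskian_of_add_C_mul_eq_mul_sq {φ f g Q : R[X]} {t : R}
    (h : φ + C t * f = g * Q ^ 2) : Q ∣ wronskian f φ := by
  rw [← wronskian_add_C_mul_self_right f φ t, h]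
  exact dvd_wronskian_of_sq_dvd_right (dvd_mul_left _ _)

end CommRing

section Field

variable {K : Type*} [Field K]

theorem isCoprime_of_dvd_add_C_mul {φ f P Q : K[X]} {s t : K} (hcop : IsCoprime φ f)
    (hst : s ≠ t) (hP : P ∣ φ + C s * f) (hQ : Q ∣ φ + C t * f) : IsCoprime P Q := by
  have hunit : IsUnit (C s - C t) := by
    rw [← C_sub]
    exact isUnit_C.mpr (sub_ne_zero.mpr hst).isUnit
  exact ((hcop.add_mul_add_mul_of_isUnit_sub hunit).of_isCoprime_of_dvd_left hP)
    |>.of_isCoprime_of_dvd_right hQ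

theorem exists_eq_C_mul_of_dvd_of_natDegree_le {p q : K[X]} (hpq : p ∣ q) (hq : q ≠ 0)
    (hdeg : q.natDegree ≤ p.natDegree) : ∃ c : K, c ≠ 0 ∧ p = C c * q := by
  obtain ⟨u, hu⟩ := (associated_of_dvd_of_natDegree_le hpq hq hdeg).symm
  obtain ⟨c, hc, hcu⟩ := isUnit_iff.mp u.isUnit
  exact ⟨c, hc.ne_zero, by rw [← hu, ← hcu, mul_comm]⟩

end Field

theorem isCoprime_of_forall_not_eval_eq_zero {K : Type*} [Field K] [IsAlgClosed K] {p q : K[X]}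
    (h : ∀ z, ¬(p.eval z = 0 ∧ q.eval z = 0)) : IsCoprime p q :=
  (isCoprime_iff_aeval_ne_zero_of_isAlgClosed (k := K) K p q).2 fun z => by
    simpa only [coe_aeval_eq_eval, ne_eq] using not_and_or.mp (h z)

end Polynomial

theorem stmt_13_general (n : ℕ) (hn : Odd n) (φ f : Polynomial ℂ)
    (hφ : φ.natDegree = n) (hf : f.natDegree ≤ n - 1)
    (hcop : ∀ z : ℂ, ¬ (φ.eval z = 0 ∧ f.eval z = 0))
    (t a : Fin 4 → ℂ) (ht : Function.Injective t)
    (Q : Fin 4 → Polynomial ℂ) (hQdeg : ∀ i, (Q i).natDegree = (n - 1) / 2)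
    (hfac : ∀ i, φ + C (t i) * f = (X - C (a i)) * (Q i) ^ 2) :
    ∃ N : ℂ, N ≠ 0 ∧
      Q 0 * Q 1 * Q 2 * Q 3 =
        C N * (Polynomial.derivative φ * f - φ * Polynomial.derivative f) := by
  obtain ⟨m, rfl⟩ := hn
  have hcop' : IsCoprime φ f := isCoprime_of_forall_not_eval_eq_zero hcop
  have hQ0 : ∀ i, Q i ≠ 0 := by
    intro i hQi
    have hφf : φ = -(C (t i) * f) := by linear_combination hfac i + (X - C (a i)) * Q i * hQi
    have hle : φ.natDegree ≤ f.natDegree := by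
      rw [hφf, natDegree_neg]
      exact natDegree_C_mul_le _ _
    omega
  have hQdvd : ∀ i, Q i ∣ φ + C (t i) * f := fun i =>
    (dvd_pow_self _ two_ne_zero).trans (Dvd.intro_left _ (hfac i).symm)
  have hdvd : ∏ i, Q i ∣ wronskian f φ :=
    Fintype.prod_dvd_of_coprime
      (fun i j hij => isCoprime_of_dvd_add_C_mul hcop' (ht.ne hij) (hQdvd i) (hQdvd j))
      (fun i => dvd_wronskian_of_add_C_mul_eq_mul_sq (hfac i))
  have hW0 : wronskian f φ ≠ 0 := by
    rw [Ne, hcop'.symm.wronskian_eq_zero_iff, derivative_eq_zero, derivative_eq_zero]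
    omega
  have hdeg : (wronskian f φ).natDegree ≤ (∏ i, Q i).natDegree := by
    rw [natDegree_prod _ _ fun i _ => hQ0 i]
    have hlt := natDegree_wronskian_lt_add hW0
    simp only [hQdeg, Finset.sum_const, Finset.card_univ, Fintype.card_fin, smul_eq_mul]
    omega
  obtain ⟨N, hN, hP⟩ := exists_eq_C_mul_of_dvd_of_natDegree_le hdvd hW0 hdeg
  refine ⟨N, hN, ?_⟩
  rw [← Fin.prod_univ_four, hP, wronskian]
  ring

/-- If coprime `φ, f` (with `deg φ = n` odd, `deg f ≤ n-1`) satisfy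
`φ + tᵢ f = (X - aᵢ) Qᵢ²` for four distinct `tᵢ` and distinct `aᵢ`, with `deg Qᵢ = (n-1)/2`,
then there is a nonzero constant `N` with `Q₁Q₂Q₃Q₄ = N (φ' f - φ f')`. -/
theorem stmt_13 (n : ℕ) (hn : Odd n) (φ f : Polynomial ℂ)
    (hφ : φ.natDegree = n) (hf : f.natDegree ≤ n - 1)
    (hcop : ∀ z : ℂ, ¬ (φ.eval z = 0 ∧ f.eval z = 0))
    (t a : Fin 4 → ℂ) (ht : Function.Injective t) (ha : Function.Injective a)
    (Q : Fin 4 → Polynomial ℂ) (hQdeg : ∀ i, (Q i).natDegree = (n - 1) / 2)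
    (hfac : ∀ i, φ + C (t i) * f = (X - C (a i)) * (Q i) ^ 2) :
    ∃ N : ℂ, N ≠ 0 ∧
      Q 0 * Q 1 * Q 2 * Q 3 =
        C N * (Polynomial.derivative φ * f - φ * Polynomial.derivative f) :=
  stmt_13_general n hn φ f hφ hf hcop t a ht Q hQdeg hfac
end
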